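/- arXiv:1011.2897 — 2 statements merged into one kernel-verified Lean document; each statement's English description precedes it below -/
import Mathlib

section
/- For any nonnegative integer n and all real (or complex) x, y, the sum over k from 0 to n of binom(2n, 2k) * B_{2k}(x) * y^(2n-2k) equals (1/2) * (B_{2n}(x+y) + B_{2n}(x-y)), where B_m denotes the m-th Bernoulli polynomial. -/
open Polynomial Finset

/-!
The Bernoulli polynomials form an Appell sequence: `(B_m)' = m B_(m-1)`, so their Hasse derivatives
are `D^(k) B_m = C(m,k) B_(m-k)`, and Taylor expansion at `x` gives the addition formula
`B_m(x + y) = ∑ C(m,k) B_k(x) y^(m-k)`. Adding the formulas for `y` and `-y` with `m = 2n`, the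
terms with odd `k` cancel and those with even `k` double.
-/

namespace Polynomial

theorem map_hasseDeriv {R S : Type*} [Semiring R] [Semiring S] (f : R →+* S) (k : ℕ)
    (p : R[X]) :
    (hasseDeriv k p).map f = hasseDeriv k (p.map f) := by
  ext n
  simp [hasseDeriv_coeff, coeff_map]

theorem aeval_add_eq_sum_hasseDeriv {R A : Type*} [CommSemiring R] [CommSemiring A] [Algebra R A]
    {p : R[X]} {N : ℕ} (hN : p.natDegree < N) (x y : A) :
    aeval (x + y) p = ∑ k ∈ range N, aeval x (hasseDeriv k p) * y ^ k := by
  set q := p.map (algebraMap R A)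
  have hq : (taylor x q).natDegree < N := by
    rw [natDegree_taylor]; exact (natDegree_map_le).trans_lt hN
  calc aeval (x + y) p = (taylor x q).eval y := by
        rw [taylor_eval, add_comm, aeval_def, eval₂_eq_eval_map]
    _ = ∑ k ∈ range N, aeval x (hasseDeriv k p) * y ^ k := by
      rw [eval_eq_sum_range' hq]
      simp only [taylor_coeff, q, ← map_hasseDeriv, eval_map, ← aeval_def]

theorem natDegree_bernoulli_le (m : ℕ) : (bernoulli m).natDegree ≤ m := by
  rw [bernoulli]
  exact natDegree_sum_le_of_forall_le _ _ fun _ _ =>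
    (natDegree_monomial_le _).trans (Nat.sub_le _ _)

theorem iterate_derivative_bernoulli (m k : ℕ) :
    derivative^[k] (bernoulli m) = (m.descFactorial k : ℚ[X]) * bernoulli (m - k) := by
  induction k with
  | zero => simp
  | succ k ih =>
    rw [Function.iterate_succ_apply', ih, derivative_natCast_mul, derivative_bernoulli,
      Nat.descFactorial_succ, Nat.sub_sub, Nat.cast_mul]
    ring

theorem hasseDeriv_bernoulli (m k : ℕ) :
    hasseDeriv k (bernoulli m) = m.choose k • bernoulli (m - k) := by
  -- `k! • hasseDeriv k = derivative^[k]`, and `k!` cancels since `ℚ[X]` is torsion-free.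
  have h := congrFun (factorial_smul_hasseDeriv (R := ℚ) (k := k)) (bernoulli m)
  rw [iterate_derivative_bernoulli, Nat.descFactorial_eq_factorial_mul_choose] at h
  apply nsmul_right_injective (Nat.factorial_ne_zero k)
  simpa [mul_smul, ← nsmul_eq_mul] using h

theorem aeval_bernoulli_add {A : Type*} [CommRing A] [Algebra ℚ A] (m : ℕ) (x y : A) :
    aeval (x + y) (bernoulli m) =
      ∑ k ∈ range (m + 1), (m.choose k : A) * aeval x (bernoulli k) * y ^ (m - k) := by
  rw [aeval_add_eq_sum_hasseDeriv (Nat.lt_succ_of_le (natDegree_bernoulli_le m)),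
    ← sum_range_reflect]
  refine sum_congr rfl fun k hk => ?_
  have hkm : k ≤ m := Nat.lt_succ_iff.mp (mem_range.mp hk)
  rw [Nat.succ_sub_one, hasseDeriv_bernoulli, map_nsmul, nsmul_eq_mul, Nat.sub_sub_self hkm,
    Nat.choose_symm hkm]

end Polynomial

theorem Finset.sum_range_two_mul_add_one {M : Type*} [AddCommMonoid M] (f : ℕ → M) (n : ℕ) :
    ∑ k ∈ range (2 * n + 1), f k =
      ∑ j ∈ range (n + 1), f (2 * j) + ∑ j ∈ range n, f (2 * j + 1) := by
  induction n with
  | zero => simp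
  | succ n ih =>
    rw [show 2 * (n + 1) + 1 = 2 * n + 1 + 1 + 1 by ring, sum_range_succ, sum_range_succ, ih,
      sum_range_succ (fun j => f (2 * j)) (n + 1), sum_range_succ (fun j => f (2 * j + 1)) n]
    abel

theorem bernoulli_even_sum (n : ℕ) (x y : ℝ) :
    ∑ k ∈ Finset.range (n + 1),
      ((2 * n).choose (2 * k) : ℝ) * (Polynomial.aeval x (Polynomial.bernoulli (2 * k))) *
        y ^ (2 * n - 2 * k)
    = (1 / 2) * (Polynomial.aeval (x + y) (Polynomial.bernoulli (2 * n)) +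
        Polynomial.aeval (x - y) (Polynomial.bernoulli (2 * n))) := by
  have odd_terms :
      ∀ j ∈ range n, y ^ (2 * n - (2 * j + 1)) + (-y) ^ (2 * n - (2 * j + 1)) = 0 :=
    fun j hj => by
      rw [Odd.neg_pow ⟨n - j - 1, by have := mem_range.mp hj; omega⟩, add_neg_cancel]
  have even_terms : ∀ j, y ^ (2 * n - 2 * j) + (-y) ^ (2 * n - 2 * j) = 2 * y ^ (2 * n - 2 * j) :=
    fun j => by rw [Even.neg_pow ⟨n - j, by omega⟩]; ring
  rw [sub_eq_add_neg, aeval_bernoulli_add, aeval_bernoulli_add, ← sum_add_distrib,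
    sum_range_two_mul_add_one, sum_eq_zero (s := range n), add_zero, mul_sum]
  · refine sum_congr rfl fun j _ => ?_
    rw [← mul_add, even_terms]
    ring
  · intro j hj
    rw [← mul_add, odd_terms j hj, mul_zero]
end

section
/- For any nonnegative integer n, the sum over k from 0 to n of (2^{1-2k} - 1) * zeta(2k) * (pi*i)^{2n-2k} / (2n-2k)! equals zeta(2n), where zeta is the Riemann zeta function (with zeta(0) = -1/2). -/
/-!
With `B(x) = x / (eˣ - 1) = ∑ Bⱼ xʲ / j!`, one has `B(2x) = 2x / (e²ˣ - 1)`, hence the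
identity `(2 B(x) - B(2x)) (eˣ + e⁻ˣ) = 2 B(2x) + 2x`. The second factor has only even
coefficients, `2 / (2j)!`, so comparing coefficients of `x²ⁿ` gives
`∑ₖ (2 - 4ᵏ) B₂ₖ / ((2k)! (2n - 2k)!) = 4ⁿ B₂ₙ / (2n)!`. Substituting Euler's formula
`ζ(2k) = -(2πi)²ᵏ B₂ₖ / (2 (2k)!)`, which also holds for `k = 0`, turns this into the claim.
-/

open Finset Real
open scoped Nat

namespace PowerSeries

theorem coeff_two_mul_mul_of_coeff_odd_eq_zero {R : Type*} [CommSemiring R] (f g : R⟦X⟧)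
    (hg : ∀ j, Odd j → coeff j g = 0) (n : ℕ) :
    coeff (2 * n) (f * g) =
      ∑ p ∈ antidiagonal n, coeff (2 * p.1) f * coeff (2 * p.2) g := by
  have hsub : (antidiagonal n).image (fun p ↦ (2 * p.1, 2 * p.2)) ⊆ antidiagonal (2 * n) := by
    simp only [subset_iff, mem_image, HasAntidiagonal.mem_antidiagonal]
    rintro _ ⟨q, hq, rfl⟩
    omega
  rw [coeff_mul, ← sum_subset hsub, sum_image (by simp [Set.InjOn, Prod.ext_iff])]
  rintro ⟨a, b⟩ hab hnot
  rw [HasAntidiagonal.mem_antidiagonal] at hab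
  suffices Odd b by rw [hg b this, mul_zero]
  by_contra hb
  obtain ⟨j, rfl⟩ := Nat.not_odd_iff_even.mp hb
  obtain ⟨i, rfl⟩ : Even a := by
    have : Even (a + (j + j)) := hab ▸ even_two_mul n
    simpa [Nat.even_add] using this
  refine hnot (mem_image.mpr ⟨(i, j), ?_, ?_⟩)
  · rw [HasAntidiagonal.mem_antidiagonal]
    omega
  · simp only [Prod.mk.injEq]
    omega

theorem coeff_two_mul_bernoulliPowerSeries_sub_rescale (j : ℕ) :
    coeff j (2 * bernoulliPowerSeries ℚ - rescale 2 (bernoulliPowerSeries ℚ)) =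
      (2 - 2 ^ j) * bernoulli j / j ! := by
  rw [← map_ofNat C, map_sub, coeff_C_mul, coeff_rescale, bernoulliPowerSeries, coeff_mk,
    Algebra.algebraMap_self, RingHom.id_apply]
  ring

theorem coeff_exp_add_exp_neg (j : ℕ) :
    coeff j (exp ℚ + evalNegHom (exp ℚ)) = (1 + (-1) ^ j) / j ! := by
  rw [map_add, evalNegHom, coeff_rescale, coeff_exp, Algebra.algebraMap_self, RingHom.id_apply]
  ring

theorem two_mul_bernoulliPowerSeries_sub_rescale_mul_exp_add_exp_neg :
    (2 * bernoulliPowerSeries ℚ - rescale 2 (bernoulliPowerSeries ℚ)) *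
      (exp ℚ + evalNegHom (exp ℚ)) =
    2 * rescale 2 (bernoulliPowerSeries ℚ) + 2 * X := by
  set B := bernoulliPowerSeries ℚ
  set E := exp ℚ
  have hB : B * (E - 1) = X := bernoulliPowerSeries_mul_exp_sub_one ℚ
  have hB₂ : rescale 2 B * (E ^ 2 - 1) = 2 * X := by
    rw [exp_pow_eq_rescale_exp, Nat.cast_ofNat, ← map_one (rescale (2 : ℚ)), ← map_sub,
      ← map_mul, hB, rescale_X, ← map_ofNat C]
  have hE : E * evalNegHom E = 1 := exp_mul_exp_neg_eq_one
  have hne : (E ^ 2 - 1) * E ≠ 0 := by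
    refine mul_ne_zero (fun h ↦ ?_) (fun h ↦ ?_)
    · simpa [E, exp_pow_eq_rescale_exp, coeff_rescale, coeff_exp] using congrArg (coeff 1) h
    · simpa [E] using congrArg constantCoeff h
  -- `B`, `rescale 2 B` and `evalNegHom E` have denominators `E - 1`, `E ^ 2 - 1` and `E`.
  apply mul_right_cancel₀ hne
  linear_combination (2 * (E ^ 3 + E ^ 2 + E + 1)) * hB - (E + 1) ^ 2 * hB₂ +
    ((2 * B - rescale 2 B) * (E ^ 2 - 1)) * hE

end PowerSeries

open PowerSeries in
theorem sum_antidiagonal_two_sub_four_pow_mul_bernoulli (n : ℕ) :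
    ∑ p ∈ antidiagonal n, (2 - 4 ^ p.1 : ℚ) * bernoulli (2 * p.1) / ((2 * p.1)! * (2 * p.2)!) =
      4 ^ n * bernoulli (2 * n) / (2 * n)! := by
  have h := congrArg (coeff (2 * n)) two_mul_bernoulliPowerSeries_sub_rescale_mul_exp_add_exp_neg
  rw [coeff_two_mul_mul_of_coeff_odd_eq_zero _ _ (fun j hj ↦ by
    rw [coeff_exp_add_exp_neg, hj.neg_one_pow, add_neg_cancel, zero_div])] at h
  simp only [coeff_two_mul_bernoulliPowerSeries_sub_rescale, coeff_exp_add_exp_neg, pow_mul,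
    neg_one_sq, one_pow] at h
  rw [← map_ofNat C, map_add, coeff_C_mul, coeff_C_mul, coeff_rescale, bernoulliPowerSeries,
    coeff_mk, coeff_X, if_neg (by omega), Algebra.algebraMap_self, RingHom.id_apply] at h
  rw [← mul_right_inj' (two_ne_zero' ℚ), mul_sum]
  convert h using 1
  · exact sum_congr rfl fun p _ ↦ by ring
  · rw [pow_mul]
    ring

open Complex in
theorem riemannZeta_two_mul_nat_eq_neg_bernoulli (k : ℕ) :
    riemannZeta (2 * k) = -(2 * π * I) ^ (2 * k) * bernoulli (2 * k) / (2 * (2 * k)!) := by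
  rw [riemannZeta_two_mul_nat', zpow_sub₀ two_ne_zero, zpow_one, zpow_mul, zpow_natCast,
    mul_pow, mul_pow, pow_mul I, I_sq, pow_mul (2 : ℂ)]
  field_simp
  ring

theorem zeta_even_sum (n : ℕ) :
    ∑ k ∈ Finset.range (n + 1),
      ((2 : ℂ) ^ ((1 : ℤ) - 2 * k) - 1) * riemannZeta (2 * k) *
        ((Real.pi : ℂ) * Complex.I) ^ (2 * (n - k)) / (Nat.factorial (2 * (n - k)))
    = riemannZeta (2 * n) := by
  set w := (π : ℂ) * Complex.I
  have term (k : ℕ) (hk : k ≤ n) :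
      ((2 : ℂ) ^ ((1 : ℤ) - 2 * k) - 1) * riemannZeta (2 * k) * w ^ (2 * (n - k)) /
          (2 * (n - k))! = -w ^ (2 * n) / 2 *
          (((2 - 4 ^ k : ℚ) * bernoulli (2 * k) / ((2 * k)! * (2 * (n - k))!) : ℚ) : ℂ) := by
    rw [riemannZeta_two_mul_nat_eq_neg_bernoulli, zpow_sub₀ two_ne_zero, zpow_one, zpow_mul,
      zpow_natCast, show 2 * π * Complex.I = 2 * w by ring, mul_pow (2 : ℂ), pow_mul (2 : ℂ),
      show 2 * n = 2 * k + 2 * (n - k) by omega, pow_add]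
    push_cast
    field_simp
    ring
  rw [sum_congr rfl fun k hk ↦ term k (Nat.lt_succ_iff.mp (mem_range.mp hk)), ← mul_sum,
    ← Nat.sum_antidiagonal_eq_sum_range_succ
      (fun i j ↦ (((2 - 4 ^ i : ℚ) * bernoulli (2 * i) / ((2 * i)! * (2 * j)!) : ℚ) : ℂ)),
    ← Rat.cast_sum, sum_antidiagonal_two_sub_four_pow_mul_bernoulli,
    riemannZeta_two_mul_nat_eq_neg_bernoulli, show 2 * π * Complex.I = 2 * w by ring,
    mul_pow (2 : ℂ), pow_mul (2 : ℂ)]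
  push_cast
  field_simp
  ring
end
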